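/- arXiv:1509.04574 — 4 statements merged into one kernel-verified Lean document; each statement's English description precedes it below -/
import Mathlib

section
/- In the group Z_{p^2} × Z_p (p prime), the subgroup generated by (p,0) is contained in each of the p subgroups ⟨(1,j)⟩ for 0 ≤ j ≤ p−1, and apart from these containments, any two distinct proper nontrivial cyclic subgroups of Z_{p^2} × Z_p intersect trivially; consequently I_c(Z_{p^2} × Z_p) ≅ K_{p+1} ∪ (p isolated vertices). -/
/-- The vertex type of the intersection graph of cyclic subgroups of an additive group:
proper nontrivial cyclic subgroups. -/
def AddCyclicVertex (A : Type*) [AddGroup A] : Type _ :=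
  {H : AddSubgroup A // H ≠ ⊥ ∧ H ≠ ⊤ ∧ IsAddCyclic H}

/-- The intersection graph of cyclic subgroups of an additive group `A`. -/
def addCyclicIntersectionGraph (A : Type*) [AddGroup A] :
    SimpleGraph (AddCyclicVertex A) where
  Adj H K := H ≠ K ∧ H.1 ⊓ K.1 ≠ ⊥
  symm := by
    constructor
    rintro H K ⟨h1, h2⟩
    exact ⟨h1.symm, by rwa [inf_comm]⟩
  loopless := by
    constructor
    rintro H ⟨h, -⟩
    exact h rfl

/-!
Write `π : ZMod (p ^ 2) → ZMod p` for reduction. Rescaling a generator by a unit of `ZMod (p ^ 2)`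
does not change the cyclic subgroup, so every nonzero `(a, b)` generates the same subgroup as
`(1, j)` (if `π a ≠ 0`), as `(p c, 1)` (if `π a = 0`, `b ≠ 0`) or as `(p, 0)`. The `p` subgroups
`⟨(1, j)⟩` have order `p²` and all contain `⟨(p, 0)⟩ = pG`; the other `p + 1` have order `p`, so
two of them meet nontrivially only if they are equal, and `⟨(p c, 1)⟩` lies in no `⟨(1, j)⟩`,
whose elements of order `p` all lie in `⟨(p, 0)⟩`. Finally `G` is not cyclic, as `p² • G = 0`.
-/

namespace AddSubgroup

variable {A : Type*} [AddGroup A] {p : ℕ}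

theorem zmultiples_eq_of_mem_of_prime_nsmul_eq_zero (hp : p.Prime) {x z : A} (hx : p • x = 0)
    (hz : z ∈ zmultiples x) (hz0 : z ≠ 0) : zmultiples z = zmultiples x := by
  obtain ⟨n, rfl⟩ := mem_zmultiples_iff.1 hz
  have hpx : (p : ℤ) • x = 0 := by rw [natCast_zsmul, hx]
  have hpn : ¬ (p : ℤ) ∣ n := by
    rintro ⟨k, rfl⟩
    exact hz0 (by rw [mul_zsmul', hpx, zsmul_zero])
  obtain ⟨a, b, hab⟩ := (Nat.prime_iff_prime_int.1 hp).irreducible.coprime_iff_not_dvd.2 hpn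
  refine le_antisymm (zmultiples_le.2 ⟨n, rfl⟩) (zmultiples_le.2 ⟨b, ?_⟩)
  calc b • n • x = (a * p + b * n) • x := by
        rw [add_zsmul, mul_zsmul, hpx, zsmul_zero, zero_add, mul_zsmul]
    _ = x := by rw [hab, one_zsmul]

theorem zmultiples_le_of_inf_ne_bot (hp : p.Prime) {x : A} (hx : p • x = 0)
    {H : AddSubgroup A} (h : zmultiples x ⊓ H ≠ ⊥) : zmultiples x ≤ H := by
  obtain ⟨z, hz, hz0⟩ := (zmultiples x ⊓ H).bot_or_exists_ne_zero.resolve_left h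
  rw [← zmultiples_eq_of_mem_of_prime_nsmul_eq_zero hp hx (mem_inf.1 hz).1 hz0]
  exact zmultiples_le.2 (mem_inf.1 hz).2

theorem zmultiples_eq_of_inf_ne_bot (hp : p.Prime) {x y : A} (hx : p • x = 0)
    (hy : p • y = 0) (h : zmultiples x ⊓ zmultiples y ≠ ⊥) : zmultiples x = zmultiples y :=
  le_antisymm (zmultiples_le_of_inf_ne_bot hp hx h)
    (zmultiples_le_of_inf_ne_bot hp hy (inf_comm (zmultiples x) _ ▸ h))

end AddSubgroup

open AddSubgroup

section ZModPrimeSq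

variable {p : ℕ}

local notation "π" => ZMod.castHom (dvd_pow_self p two_ne_zero) (ZMod p)

local notation "G" => ZMod (p ^ 2) × ZMod p

namespace ZMod

theorem exists_eq_natCast_mul {a : ZMod (p ^ 2)} (ha : π a = 0) :
    ∃ t : ZMod (p ^ 2), a = (p : ZMod (p ^ 2)) * t := by
  obtain ⟨n, rfl⟩ := intCast_surjective a
  rw [map_intCast, intCast_zmod_eq_zero_iff_dvd] at ha
  obtain ⟨k, rfl⟩ := ha
  exact ⟨k, by push_cast; rfl⟩

theorem castHom_natCast_val [NeZero p] (c : ZMod p) : π (c.val : ZMod (p ^ 2)) = c := by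
  rw [map_natCast, natCast_zmod_val]

theorem castHom_natCast_mul (s : ZMod (p ^ 2)) : π ((p : ZMod (p ^ 2)) * s) = 0 := by
  rw [map_mul, map_natCast, natCast_self, zero_mul]

theorem natCast_mul_eq_zero_iff [NeZero p] (s : ZMod (p ^ 2)) :
    (p : ZMod (p ^ 2)) * s = 0 ↔ π s = 0 := by
  obtain ⟨n, rfl⟩ := intCast_surjective s
  have hp0 : (p : ℤ) ≠ 0 := by exact_mod_cast NeZero.ne p
  rw [← Int.cast_natCast, ← Int.cast_mul, map_intCast, intCast_zmod_eq_zero_iff_dvd,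
    intCast_zmod_eq_zero_iff_dvd, Nat.cast_pow, sq, Int.mul_dvd_mul_iff_left hp0]

theorem natCast_mul_eq_natCast_mul_iff [NeZero p] (s t : ZMod (p ^ 2)) :
    (p : ZMod (p ^ 2)) * s = (p : ZMod (p ^ 2)) * t ↔ π s = π t := by
  rw [← sub_eq_zero, ← mul_sub, natCast_mul_eq_zero_iff, map_sub, sub_eq_zero]

theorem isUnit_iff_castHom_ne_zero [hp : Fact p.Prime] (a : ZMod (p ^ 2)) :
    IsUnit a ↔ π a ≠ 0 := by
  rw [← natCast_zmod_val a, isUnit_iff_coprime, Nat.coprime_pow_right_iff two_pos,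
    map_natCast, Ne, natCast_eq_zero_iff, Nat.coprime_comm, hp.out.coprime_iff_not_dvd]

end ZMod

-- `G` is a `ZMod (p ^ 2)`-module via `s • (a, b) = (s a, π s b)`; its cyclic subgroups are its
-- cyclic submodules.
theorem mem_zmultiples_iff_exists_scalar {x z : G} :
    z ∈ zmultiples x ↔ ∃ s : ZMod (p ^ 2), z = (s * x.1, π s * x.2) := by
  constructor
  · rintro ⟨n, rfl⟩
    exact ⟨n, by ext <;> simp [zsmul_eq_mul]⟩
  · rintro ⟨s, rfl⟩
    obtain ⟨n, rfl⟩ := ZMod.intCast_surjective s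
    exact ⟨n, by ext <;> simp [zsmul_eq_mul]⟩

theorem scalar_mem_zmultiples (s : ZMod (p ^ 2)) (x : G) : (s * x.1, π s * x.2) ∈ zmultiples x :=
  mem_zmultiples_iff_exists_scalar.2 ⟨s, rfl⟩

theorem exists_scalar_of_zmultiples_eq {x y : G} (h : zmultiples x = zmultiples y) :
    ∃ s : ZMod (p ^ 2), x = (s * y.1, π s * y.2) :=
  mem_zmultiples_iff_exists_scalar.1 (h ▸ mem_zmultiples x)

theorem zmultiples_scalar_eq_of_isUnit {s : ZMod (p ^ 2)} (hs : IsUnit s) (x : G) :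
    zmultiples ((s * x.1, π s * x.2) : G) = zmultiples x := by
  obtain ⟨t, hts⟩ := hs.exists_left_inv
  refine le_antisymm (zmultiples_le.2 (scalar_mem_zmultiples s x)) (zmultiples_le.2 ?_)
  convert scalar_mem_zmultiples t ((s * x.1, π s * x.2) : G) using 1
  rw [← mul_assoc, ← mul_assoc, ← map_mul, hts, map_one, one_mul, one_mul]

theorem nsmul_eq_zero_iff_castHom_fst [NeZero p] (x : G) : p • x = 0 ↔ π x.1 = 0 := by
  rw [← ZMod.natCast_mul_eq_zero_iff, Prod.ext_iff]
  simp [nsmul_eq_mul]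

theorem nsmul_smallCyclic_gen [NeZero p] (c : ZMod p) :
    p • (((p : ZMod (p ^ 2)) * (c.val : ZMod (p ^ 2)), (1 : ZMod p)) : G) = 0 :=
  (nsmul_eq_zero_iff_castHom_fst _).2 (ZMod.castHom_natCast_mul _)

theorem nsmul_pMultiples_gen [NeZero p] : p • (((p : ZMod (p ^ 2)), (0 : ZMod p)) : G) = 0 :=
  (nsmul_eq_zero_iff_castHom_fst _).2 (by rw [map_natCast, ZMod.natCast_self])

variable (p)

def pMultiples : AddSubgroup G := zmultiples ((p : ZMod (p ^ 2)), (0 : ZMod p))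

def largeCyclic (j : ZMod p) : AddSubgroup G := zmultiples ((1 : ZMod (p ^ 2)), j)

def smallCyclic (c : ZMod p) : AddSubgroup G :=
  zmultiples ((p : ZMod (p ^ 2)) * (c.val : ZMod (p ^ 2)), (1 : ZMod p))

def cliqueVertices : Set (AddSubgroup G) :=
  insert (pMultiples p) {H | ∃ j : ZMod p, H = largeCyclic p j}

def isolatedVertices : Set (AddSubgroup G) := Set.range (smallCyclic p)

variable {p}

theorem pMultiples_le_largeCyclic (j : ZMod p) : pMultiples p ≤ largeCyclic p j := by
  refine zmultiples_le.2 ⟨p, ?_⟩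
  ext <;> simp

theorem pMultiples_le_of_mem_cliqueVertices {H : AddSubgroup G} (hH : H ∈ cliqueVertices p) :
    pMultiples p ≤ H := by
  rcases hH with rfl | ⟨j, rfl⟩
  exacts [le_rfl, pMultiples_le_largeCyclic j]

theorem pMultiples_ne_bot [Fact p.Prime] : pMultiples p ≠ ⊥ := by
  rw [pMultiples, Ne, zmultiples_eq_bot]
  intro h
  have := (ZMod.natCast_mul_eq_zero_iff 1).1 ((mul_one _).trans (congrArg Prod.fst h))
  rw [map_one] at this
  exact one_ne_zero this

theorem inf_ne_bot_of_mem_cliqueVertices [Fact p.Prime] {A B : AddSubgroup G}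
    (hA : A ∈ cliqueVertices p) (hB : B ∈ cliqueVertices p) : A ⊓ B ≠ ⊥ :=
  ne_bot_of_le_ne_bot pMultiples_ne_bot
    (le_inf (pMultiples_le_of_mem_cliqueVertices hA) (pMultiples_le_of_mem_cliqueVertices hB))

theorem zmultiples_eq_largeCyclic_of_isUnit {x : G} (hx : IsUnit x.1) :
    ∃ j, zmultiples x = largeCyclic p j := by
  obtain ⟨u, hu⟩ := hx.exists_left_inv
  refine ⟨π u * x.2, ?_⟩
  rw [← zmultiples_scalar_eq_of_isUnit (IsUnit.of_mul_eq_one _ hu) x, hu]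
  rfl

theorem exists_zmultiples_eq_smallCyclic [Fact p.Prime] {x : G} (h1 : π x.1 = 0)
    (h2 : x.2 ≠ 0) : ∃ c, zmultiples x = smallCyclic p c := by
  obtain ⟨t, ht⟩ := ZMod.exists_eq_natCast_mul h1
  set v : ZMod (p ^ 2) := (x.2⁻¹.val : ZMod (p ^ 2))
  have hv : π v = x.2⁻¹ := ZMod.castHom_natCast_val _
  have hvu : IsUnit v := (ZMod.isUnit_iff_castHom_ne_zero v).2 (hv ▸ inv_ne_zero h2)
  refine ⟨π (v * t), ?_⟩
  rw [← zmultiples_scalar_eq_of_isUnit hvu x, smallCyclic, ht, hv, inv_mul_cancel₀ h2,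
    mul_left_comm, (ZMod.natCast_mul_eq_natCast_mul_iff _ _).2 (ZMod.castHom_natCast_val _).symm]

theorem zmultiples_eq_pMultiples [Fact p.Prime] {x : G} (h1 : π x.1 = 0) (h0 : x.1 ≠ 0)
    (h2 : x.2 = 0) : zmultiples x = pMultiples p := by
  obtain ⟨t, ht⟩ := ZMod.exists_eq_natCast_mul h1
  have htu : IsUnit t := (ZMod.isUnit_iff_castHom_ne_zero t).2 fun h ↦
    h0 (by rw [ht, (ZMod.natCast_mul_eq_zero_iff t).2 h])
  obtain ⟨w, hw⟩ := htu.exists_left_inv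
  rw [← zmultiples_scalar_eq_of_isUnit (IsUnit.of_mul_eq_one _ hw) x, ht, h2, mul_left_comm, hw,
    mul_one, mul_zero]
  rfl

theorem zmultiples_mem_vertices [Fact p.Prime] {x : G} (hx : x ≠ 0) :
    zmultiples x ∈ cliqueVertices p ∪ isolatedVertices p := by
  by_cases h1 : π x.1 = 0
  · by_cases h2 : x.2 = 0
    · exact Or.inl (Or.inl (zmultiples_eq_pMultiples h1 (fun h ↦ hx (Prod.ext h h2)) h2))
    · obtain ⟨c, hc⟩ := exists_zmultiples_eq_smallCyclic h1 h2
      exact Or.inr ⟨c, hc.symm⟩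
  · exact Or.inl (Or.inr (zmultiples_eq_largeCyclic_of_isUnit
      ((ZMod.isUnit_iff_castHom_ne_zero _).2 h1)))

theorem largeCyclic_injective : Function.Injective (largeCyclic p) := by
  intro i j h
  obtain ⟨s, hs⟩ := exists_scalar_of_zmultiples_eq h
  simp only [Prod.mk.injEq, mul_one] at hs
  rw [hs.2, ← hs.1, map_one, one_mul]

theorem smallCyclic_injective [NeZero p] : Function.Injective (smallCyclic p) := by
  intro c d h
  obtain ⟨s, hs⟩ := exists_scalar_of_zmultiples_eq h
  simp only [Prod.mk.injEq, mul_one] at hs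
  rw [mul_left_comm, ZMod.natCast_mul_eq_natCast_mul_iff, map_mul, ← hs.2, one_mul,
    ZMod.castHom_natCast_val, ZMod.castHom_natCast_val] at hs
  exact hs.1

theorem largeCyclic_ne_zmultiples [Fact p.Prime] {x : G} (hx : π x.1 = 0) (j : ZMod p) :
    largeCyclic p j ≠ zmultiples x := by
  intro h
  obtain ⟨s, hs⟩ := exists_scalar_of_zmultiples_eq h
  have := congrArg (fun y : G ↦ π y.1) hs
  simp only [map_one, map_mul, hx, mul_zero] at this
  exact one_ne_zero this

theorem smallCyclic_ne_pMultiples [Fact p.Prime] (c : ZMod p) :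
    smallCyclic p c ≠ pMultiples p := by
  intro h
  obtain ⟨s, hs⟩ := exists_scalar_of_zmultiples_eq h
  have := congrArg Prod.snd hs
  rw [mul_zero] at this
  exact one_ne_zero this

theorem mem_pMultiples_of_mem_largeCyclic {j : ZMod p} {z : G} (hz : z ∈ largeCyclic p j)
    (hz' : π z.1 = 0) : z ∈ pMultiples p := by
  obtain ⟨s, rfl⟩ := mem_zmultiples_iff_exists_scalar.1 hz
  dsimp only at hz' ⊢
  rw [mul_one] at hz' ⊢
  obtain ⟨t, rfl⟩ := ZMod.exists_eq_natCast_mul hz'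
  have h := scalar_mem_zmultiples t ((p : ZMod (p ^ 2)), (0 : ZMod p))
  dsimp only at h
  rw [mul_zero, mul_comm] at h
  rwa [hz', zero_mul]

theorem smallCyclic_inf_pMultiples [hp : Fact p.Prime] (c : ZMod p) :
    smallCyclic p c ⊓ pMultiples p = ⊥ := by
  by_contra h
  exact smallCyclic_ne_pMultiples c (zmultiples_eq_of_inf_ne_bot hp.out
    (nsmul_smallCyclic_gen c) nsmul_pMultiples_gen h)

theorem smallCyclic_inf_eq_bot [hp : Fact p.Prime] {c : ZMod p} {B : AddSubgroup G}
    (hB : B ∈ cliqueVertices p ∪ isolatedVertices p) (hne : smallCyclic p c ≠ B) :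
    smallCyclic p c ⊓ B = ⊥ := by
  by_contra h
  rcases hB with (rfl | ⟨j, rfl⟩) | ⟨d, rfl⟩
  · exact h (smallCyclic_inf_pMultiples c)
  · have hle := zmultiples_le_of_inf_ne_bot hp.out (nsmul_smallCyclic_gen c) h
    have hP : smallCyclic p c ≤ pMultiples p := zmultiples_le.2
      (mem_pMultiples_of_mem_largeCyclic (zmultiples_le.1 hle) (ZMod.castHom_natCast_mul _))
    exact ne_bot_of_le_ne_bot h inf_le_left
      (by rw [← inf_eq_left.2 hP, smallCyclic_inf_pMultiples])
  · exact hne (zmultiples_eq_of_inf_ne_bot hp.out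
      (nsmul_smallCyclic_gen c) (nsmul_smallCyclic_gen d) h)

theorem mem_cliqueVertices_of_inf_ne_bot [Fact p.Prime] {A B : AddSubgroup G}
    (hA : A ∈ cliqueVertices p ∪ isolatedVertices p)
    (hB : B ∈ cliqueVertices p ∪ isolatedVertices p)
    (hAB : A ≠ B) (h : A ⊓ B ≠ ⊥) : A ∈ cliqueVertices p := by
  rcases hA with hA | ⟨c, rfl⟩
  exacts [hA, absurd (smallCyclic_inf_eq_bot hB hAB) h]

theorem ncard_cliqueVertices [Fact p.Prime] : (cliqueVertices p).ncard = p + 1 := by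
  have hrange : {H | ∃ j, H = largeCyclic p j} = Set.range (largeCyclic p) := by
    ext H
    exact exists_congr fun _ ↦ eq_comm
  rw [cliqueVertices, Set.ncard_insert_of_notMem, hrange,
    Set.ncard_range_of_injective largeCyclic_injective, Nat.card_zmod]
  rintro ⟨j, hj⟩
  exact largeCyclic_ne_zmultiples (by rw [map_natCast, ZMod.natCast_self]) j hj.symm

theorem ncard_isolatedVertices [NeZero p] : (isolatedVertices p).ncard = p := by
  rw [isolatedVertices, Set.ncard_range_of_injective smallCyclic_injective, Nat.card_zmod]

theorem disjoint_cliqueVertices_isolatedVertices [Fact p.Prime] :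
    Disjoint (cliqueVertices p) (isolatedVertices p) := by
  rw [Set.disjoint_right]
  rintro _ ⟨c, rfl⟩ (h | ⟨j, h⟩)
  · exact smallCyclic_ne_pMultiples c h
  · exact largeCyclic_ne_zmultiples (ZMod.castHom_natCast_mul _) j h.symm

theorem ne_bot_of_mem_vertices [Fact p.Prime] {H : AddSubgroup G}
    (hH : H ∈ cliqueVertices p ∪ isolatedVertices p) : H ≠ ⊥ := by
  rcases hH with hH | ⟨c, rfl⟩
  · exact ne_bot_of_le_ne_bot pMultiples_ne_bot (pMultiples_le_of_mem_cliqueVertices hH)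
  · rw [smallCyclic, Ne, zmultiples_eq_bot]
    exact fun h ↦ one_ne_zero (congrArg Prod.snd h)

theorem zmultiples_ne_top [hp : Fact p.Prime] (x : G) : zmultiples x ≠ ⊤ := by
  intro h
  have hcard := congrArg (fun H : AddSubgroup G ↦ Nat.card H) h
  simp only [Nat.card_zmultiples, card_top, Nat.card_prod, Nat.card_zmod] at hcard
  have hx : p • p • x = 0 := (nsmul_eq_zero_iff_castHom_fst _).2 (by
    rw [Prod.smul_fst, nsmul_eq_mul, ZMod.castHom_natCast_mul])
  rw [← mul_nsmul, ← sq] at hx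
  have := Nat.le_of_dvd (pow_pos hp.out.pos 2) (hcard ▸ addOrderOf_dvd_of_nsmul_eq_zero hx)
  nlinarith [hp.out.two_le]

theorem setOf_isAddCyclic_eq [Fact p.Prime] :
    {H : AddSubgroup G | H ≠ ⊥ ∧ H ≠ ⊤ ∧ IsAddCyclic H} =
      cliqueVertices p ∪ isolatedVertices p := by
  ext H
  constructor
  · rintro ⟨hbot, -, hcyc⟩
    obtain ⟨x, rfl⟩ := (AddSubgroup.isAddCyclic_iff_exists_zmultiples_eq_top H).1 hcyc
    exact zmultiples_mem_vertices fun h ↦ hbot (by rw [h, zmultiples_zero_eq_bot])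
  · intro hH
    obtain ⟨x, rfl⟩ : ∃ x : G, zmultiples x = H := by
      rcases hH with (rfl | ⟨j, rfl⟩) | ⟨c, rfl⟩
      exacts [⟨_, rfl⟩, ⟨_, rfl⟩, ⟨_, rfl⟩]
    exact ⟨ne_bot_of_mem_vertices hH, zmultiples_ne_top x, inferInstance⟩

theorem card_addCyclicVertex [Fact p.Prime] : Nat.card (AddCyclicVertex G) = 2 * p + 1 := by
  rw [AddCyclicVertex, ← Set.coe_ofPred, Nat.card_coe_set_eq, setOf_isAddCyclic_eq,
    Set.ncard_union_eq disjoint_cliqueVertices_isolatedVertices, ncard_cliqueVertices,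
    ncard_isolatedVertices]
  ring

end ZModPrimeSq

theorem stmt5 (p : ℕ) (hp : p.Prime) :
    ∀ P : AddSubgroup (ZMod (p ^ 2) × ZMod p),
      P = AddSubgroup.zmultiples ((p : ZMod (p ^ 2)), (0 : ZMod p)) →
      ∀ S : Set (AddSubgroup (ZMod (p ^ 2) × ZMod p)),
        S = insert P {H | ∃ j : ZMod p, H = AddSubgroup.zmultiples ((1 : ZMod (p ^ 2)), j)} →
        (∀ j : ZMod p, P ≤ AddSubgroup.zmultiples ((1 : ZMod (p ^ 2)), j)) ∧
        (∀ A B : AddSubgroup (ZMod (p ^ 2) × ZMod p),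
          A ≠ ⊥ → A ≠ ⊤ → IsAddCyclic A → B ≠ ⊥ → B ≠ ⊤ → IsAddCyclic B → A ≠ B →
            (A ⊓ B ≠ ⊥ ↔ A ∈ S ∧ B ∈ S)) ∧
        S.ncard = p + 1 ∧
        Nat.card (AddCyclicVertex (ZMod (p ^ 2) × ZMod p)) = 2 * p + 1 := by
  have : Fact p.Prime := ⟨hp⟩
  rintro P rfl S rfl
  refine ⟨pMultiples_le_largeCyclic, fun A B hA₀ hA₁ hA₂ hB₀ hB₁ hB₂ hAB ↦ ?_,
    ncard_cliqueVertices, card_addCyclicVertex⟩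
  have hA : A ∈ cliqueVertices p ∪ isolatedVertices p := by
    rw [← setOf_isAddCyclic_eq]; exact ⟨hA₀, hA₁, hA₂⟩
  have hB : B ∈ cliqueVertices p ∪ isolatedVertices p := by
    rw [← setOf_isAddCyclic_eq]; exact ⟨hB₀, hB₁, hB₂⟩
  refine ⟨fun h ↦ ⟨mem_cliqueVertices_of_inf_ne_bot hA hB hAB h, ?_⟩,
    fun h ↦ inf_ne_bot_of_mem_cliqueVertices h.1 h.2⟩
  exact mem_cliqueVertices_of_inf_ne_bot hB hA hAB.symm (inf_comm A B ▸ h)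
end

section
/- Let G be a finite group. The intersection graph of cyclic subgroups I_c(G) is a star graph K_{1,n} (n ≥ 1) if and only if G ≅ Z_{p^3} for some prime p (in which case the graph is K_2 = K_{1,1}). -/
/-- The vertex type of the intersection graph of cyclic subgroups:
proper nontrivial cyclic subgroups of `G`. -/
def CyclicVertex (G : Type*) [Group G] : Type _ :=
  {H : Subgroup G // H ≠ ⊥ ∧ H ≠ ⊤ ∧ IsCyclic H}

/-- The intersection graph of cyclic subgroups of a group `G`: vertices are the
proper nontrivial cyclic subgroups, two distinct vertices adjacent iff their
intersection is nontrivial. -/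
def cyclicIntersectionGraph (G : Type*) [Group G] : SimpleGraph (CyclicVertex G) where
  Adj A B := A ≠ B ∧ A.1 ⊓ B.1 ≠ ⊥
  symm := by
    constructor
    rintro A B ⟨h1, h2⟩
    exact ⟨h1.symm, by rwa [inf_comm]⟩
  loopless := by
    constructor
    rintro A ⟨h, -⟩
    exact h rfl

/-!
If the graph is a star with centre `C`, every vertex `V` is comparable with `C`: a nontrivial
element of `C ⊓ V` generates a vertex lying below both, and a non-central vertex below another one
would be adjacent to it. Consequently all vertices lie below one proper subgroup, so `G` is cyclic.
In a finite cyclic group a subgroup is determined by its order and inclusion is divisibility of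
orders, so the star becomes a condition on the proper nontrivial divisors of `|G|`: one of them,
`m`, is comparable with all others, the others form an antichain, and there are at least two.
Two distinct primes `p, q ∣ |G|` would both divide `m`, and one of `p ∣ p * r`, `q ∣ q * r` (with
`m * r ∣ |G|`) violates the antichain condition; so `|G| = p ^ k`, and the chain `p ∣ p² ∣ p³`
forces `k = 3`. Conversely the subgroups of `ℤ/p³` form a chain, so the graph is complete on its
two vertices, of orders `p` and `p²`.
-/

open Subgroup

namespace IsCyclic

variable {G : Type*} [Group G] [Finite G] [IsCyclic G]

theorem mem_subgroup_iff_pow_card_eq_one (H : Subgroup G) {x : G} :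
    x ∈ H ↔ x ^ Nat.card H = 1 := by
  classical
  have := Fintype.ofFinite G
  refine ⟨fun hx => orderOf_dvd_iff_pow_eq_one.mp (H.orderOf_dvd_natCard hx), fun hx => ?_⟩
  -- `H` fills the solution set of `y ^ |H| = 1`, which has at most `|H|` elements
  have hsub : (H : Set G).toFinset ⊆ ({y | y ^ Nat.card H = 1} : Finset G) := fun y hy => by
    simp only [Finset.mem_filter, Finset.mem_univ, true_and]
    exact orderOf_dvd_iff_pow_eq_one.mp (H.orderOf_dvd_natCard (by simpa using hy))
  have hcard : Finset.card ({y | y ^ Nat.card H = 1} : Finset G) ≤ (H : Set G).toFinset.card := by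
    rw [Set.toFinset_card, ← Nat.card_eq_fintype_card]
    exact IsCyclic.card_pow_eq_one_le Nat.card_pos
  have hx' : x ∈ ({y | y ^ Nat.card H = 1} : Finset G) := by simpa using hx
  rw [← Finset.eq_of_subset_of_card_le hsub hcard] at hx'
  simpa using hx'

theorem subgroup_le_iff_card_dvd {H K : Subgroup G} : H ≤ K ↔ Nat.card H ∣ Nat.card K := by
  refine ⟨Subgroup.card_dvd_of_le, fun h x hx => ?_⟩
  obtain ⟨k, hk⟩ := h
  rw [mem_subgroup_iff_pow_card_eq_one] at hx ⊢
  rw [hk, pow_mul, hx, one_pow]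

theorem subgroup_eq_of_card_eq {H K : Subgroup G} (h : Nat.card H = Nat.card K) : H = K :=
  le_antisymm (subgroup_le_iff_card_dvd.mpr h.dvd) (subgroup_le_iff_card_dvd.mpr h.symm.dvd)

theorem exists_subgroup_card_eq {d : ℕ} (hd : d ∣ Nat.card G) :
    ∃ H : Subgroup G, Nat.card H = d := by
  obtain ⟨g, hg⟩ := IsCyclic.exists_ofOrder_eq_natCard (α := G)
  refine ⟨zpowers (g ^ (Nat.card G / d)), ?_⟩
  rw [Nat.card_zpowers, ← hg]
  exact orderOf_pow_orderOf_div (hg ▸ Nat.card_pos.ne') (hg ▸ hd)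

theorem subgroup_le_total {p k : ℕ} (hp : p.Prime) (hG : Nat.card G = p ^ k) (H K : Subgroup G) :
    H ≤ K ∨ K ≤ H := by
  obtain ⟨i, -, hi⟩ := (Nat.dvd_prime_pow hp).mp (hG ▸ card_subgroup_dvd_card H)
  obtain ⟨j, -, hj⟩ := (Nat.dvd_prime_pow hp).mp (hG ▸ card_subgroup_dvd_card K)
  simp only [subgroup_le_iff_card_dvd, hi, hj]
  exact (le_total i j).imp (pow_dvd_pow p) (pow_dvd_pow p)

end IsCyclic

def IsProperNontrivialDivisor (N d : ℕ) : Prop := d ∣ N ∧ 1 < d ∧ d < N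

namespace IsProperNontrivialDivisor

variable {N m : ℕ}

theorem not_dvd_chain
    (hleaf : IsAntichain (· ∣ ·) {d | IsProperNontrivialDivisor N d ∧ d ≠ m}) {a b c : ℕ}
    (ha : IsProperNontrivialDivisor N a) (hb : IsProperNontrivialDivisor N b)
    (hc : IsProperNontrivialDivisor N c) (hab : a ∣ b) (hbc : b ∣ c) (hab' : a ≠ b)
    (hbc' : b ≠ c) : False := by
  have hac : a ≠ c := fun h => hab' (Nat.dvd_antisymm hab (h ▸ hbc))
  by_cases ham : a = m
  · exact hleaf ⟨hb, ham ▸ hab'.symm⟩ ⟨hc, ham ▸ hac.symm⟩ hbc' hbc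
  by_cases hbm : b = m
  · exact hleaf ⟨ha, ham⟩ ⟨hc, hbm ▸ hbc'.symm⟩ hac (hab.trans hbc)
  · exact hleaf ⟨ha, ham⟩ ⟨hb, hbm⟩ hab' hab

theorem prime_eq_of_dvd (hm : IsProperNontrivialDivisor N m)
    (hcomp : ∀ d, IsProperNontrivialDivisor N d → d ∣ m ∨ m ∣ d)
    (hleaf : IsAntichain (· ∣ ·) {d | IsProperNontrivialDivisor N d ∧ d ≠ m})
    {p q : ℕ} (hp : p.Prime) (hq : q.Prime) (hpN : p ∣ N) (hqN : q ∣ N) : p = q := by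
  obtain ⟨hmN, hm1, hmlt⟩ := hm
  have hprime : ∀ {r}, r.Prime → r ∣ N → IsProperNontrivialDivisor N r := by
    refine fun hr hrN => ⟨hrN, hr.one_lt, lt_of_le_of_ne (Nat.le_of_dvd (by omega) hrN) ?_⟩
    rintro rfl
    rcases hr.eq_one_or_self_of_dvd m hmN with h | h <;> omega
  have hdvd : ∀ {r}, r.Prime → r ∣ N → r ∣ m := fun hr hrN =>
    (hcomp _ (hprime hr hrN)).elim id fun h =>
      ((hr.eq_one_or_self_of_dvd m h).resolve_left (by omega)) ▸ dvd_rfl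
  by_contra hpq
  have hne : ∀ {r s}, r.Prime → s.Prime → s ∣ N → r ≠ s → r ≠ m := fun hr hs hsN hrs hrm =>
    hrs ((Nat.prime_dvd_prime_iff_eq hs hr).mp (hrm ▸ hdvd hs hsN)).symm
  -- some prime `r` has `m * r ∣ N`, and a prime `s ∣ m` with `s * r ≠ m` breaks the antichain
  set r := (N / m).minFac
  have hr : r.Prime := Nat.minFac_prime fun h => by
    rw [Nat.div_eq_iff_eq_mul_left (by omega) hmN, one_mul] at h; omega
  have hmr : m * r ∣ N := Nat.mul_dvd_of_dvd_div hmN (Nat.minFac_dvd _)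
  obtain ⟨s, hs, hsN, hsm, hsrm⟩ : ∃ s, s.Prime ∧ s ∣ N ∧ s ≠ m ∧ s * r ≠ m := by
    by_cases h : p * r = m
    · refine ⟨q, hq, hqN, hne hq hp hpN (Ne.symm hpq), fun h' => hpq ?_⟩
      exact Nat.eq_of_mul_eq_mul_right hr.pos (h.trans h'.symm)
    · exact ⟨p, hp, hpN, hne hp hq hqN hpq, h⟩
  have hslt : s < m := lt_of_le_of_ne (Nat.le_of_dvd (by omega) (hdvd hs hsN)) hsm
  have hsr : IsProperNontrivialDivisor N (s * r) :=
    ⟨(mul_dvd_mul_right (hdvd hs hsN) r).trans hmr, by nlinarith [hs.one_lt, hr.one_lt],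
      (Nat.mul_lt_mul_of_pos_right hslt hr.pos).trans_le (Nat.le_of_dvd (by omega) hmr)⟩
  refine hleaf ⟨hprime hs hsN, hsm⟩ ⟨hsr, hsrm⟩ (fun h => ?_) (dvd_mul_right s r)
  nlinarith [hs.one_lt, hr.one_lt]

theorem prime_pow {p k i : ℕ} (hp : p.Prime) (hi : 0 < i) (hik : i < k) :
    IsProperNontrivialDivisor (p ^ k) (p ^ i) :=
  ⟨pow_dvd_pow p hik.le, Nat.one_lt_pow hi.ne' hp.one_lt, Nat.pow_lt_pow_right hp.one_lt hik⟩

theorem exists_eq_pow {p k d : ℕ} (hp : p.Prime) (hd : IsProperNontrivialDivisor (p ^ k) d) :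
    ∃ i, 0 < i ∧ i < k ∧ d = p ^ i := by
  obtain ⟨hdk, hd1, hdlt⟩ := hd
  obtain ⟨i, hik, rfl⟩ := (Nat.dvd_prime_pow hp).mp hdk
  refine ⟨i, Nat.pos_of_ne_zero ?_, lt_of_le_of_ne hik ?_, rfl⟩ <;> rintro rfl <;> simp at hd1 hdlt

theorem pow_eq_three {p k : ℕ} (hp : p.Prime) (hN : N = p ^ k)
    (hm : IsProperNontrivialDivisor N m)
    (hleaf : IsAntichain (· ∣ ·) {d | IsProperNontrivialDivisor N d ∧ d ≠ m})
    (hex : ∃ d, IsProperNontrivialDivisor N d ∧ d ≠ m) : k = 3 := by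
  subst hN
  obtain ⟨d, hd, hdm⟩ := hex
  obtain ⟨i, hi0, hik, rfl⟩ := exists_eq_pow hp hm
  obtain ⟨j, hj0, hjk, rfl⟩ := exists_eq_pow hp hd
  have hij : j ≠ i := fun h => hdm (h ▸ rfl)
  have hinj := Nat.pow_right_injective hp.two_le
  by_contra hk
  exact not_dvd_chain hleaf (prime_pow hp one_pos (by omega)) (prime_pow hp two_pos (by omega))
    (prime_pow hp three_pos (by omega)) (pow_dvd_pow p one_le_two) (pow_dvd_pow p (by norm_num))
    (fun h => by simpa using hinj h) (fun h => by simpa using hinj h)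

theorem exists_prime_eq_pow_three (hm : IsProperNontrivialDivisor N m)
    (hcomp : ∀ d, IsProperNontrivialDivisor N d → d ∣ m ∨ m ∣ d)
    (hleaf : IsAntichain (· ∣ ·) {d | IsProperNontrivialDivisor N d ∧ d ≠ m})
    (hex : ∃ d, IsProperNontrivialDivisor N d ∧ d ≠ m) : ∃ p, p.Prime ∧ N = p ^ 3 := by
  have hN1 : 1 < N := hm.2.1.trans hm.2.2
  have hp := Nat.minFac_prime hN1.ne'
  have hN := Nat.eq_prime_pow_of_unique_prime_dvd (zero_lt_one.trans hN1).ne' fun hq hqN =>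
    prime_eq_of_dvd hm hcomp hleaf hq hp hqN (Nat.minFac_dvd N)
  exact ⟨_, hp, pow_eq_three hp hN hm hleaf hex ▸ hN⟩

end IsProperNontrivialDivisor

namespace SimpleGraph

variable {V : Type*}

def IsStarCenter (Γ : SimpleGraph V) (c : V) : Prop :=
  (∀ v, v ≠ c → Γ.Adj c v) ∧ ∀ u v, u ≠ c → v ≠ c → ¬Γ.Adj u v

theorem Iso.isStarCenter_symm_inl {Γ : SimpleGraph V} {β : Type*}
    (φ : Γ ≃g completeBipartiteGraph (Fin 1) β) : Γ.IsStarCenter (φ.symm (Sum.inl 0)) := by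
  have hinr : ∀ v, v ≠ φ.symm (Sum.inl 0) → ∃ j, φ v = Sum.inr j := by
    intro v hv
    rcases h : φ v with i | j
    · exact absurd (by rw [← Fin.eq_zero i, ← h, φ.symm_apply_apply]) hv
    · exact ⟨j, rfl⟩
  refine ⟨fun v hv => ?_, fun u v hu hv => ?_⟩
  · obtain ⟨j, hj⟩ := hinr v hv
    rw [← φ.map_adj_iff, hj, φ.apply_symm_apply]
    simp
  · obtain ⟨i, hi⟩ := hinr u hu
    obtain ⟨j, hj⟩ := hinr v hv
    rw [← φ.map_adj_iff, hi, hj]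
    simp

theorem completeBipartiteGraph_eq_top {α β : Type*} [Subsingleton α] [Subsingleton β] :
    completeBipartiteGraph α β = ⊤ := by
  ext (a | a) (b | b)
  · simpa [completeBipartiteGraph] using Subsingleton.elim a b
  · simp [completeBipartiteGraph]
  · simp [completeBipartiteGraph]
  · simpa [completeBipartiteGraph] using Subsingleton.elim a b

theorem nonempty_top_iso_completeBipartiteGraph_fin_one_fin_one {a b : V} (hab : a ≠ b)
    (hV : ∀ v, v = a ∨ v = b) :
    Nonempty ((⊤ : SimpleGraph V) ≃g completeBipartiteGraph (Fin 1) (Fin 1)) := by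
  have hbij : Function.Bijective (Sum.elim (fun _ => a) (fun _ => b) : Fin 1 ⊕ Fin 1 → V) := by
    refine ⟨?_, fun v => (hV v).elim (fun h => ⟨.inl 0, h.symm⟩) (fun h => ⟨.inr 0, h.symm⟩)⟩
    rintro (i | i) (j | j) h <;> simp_all [Subsingleton.elim i j, hab.symm]
  rw [completeBipartiteGraph_eq_top]
  exact ⟨Iso.completeGraph (Equiv.ofBijective _ hbij).symm⟩

end SimpleGraph

namespace CyclicVertex

variable {G : Type*} [Group G]

def zpowers (g : G) (hg : g ≠ 1) (htop : Subgroup.zpowers g ≠ ⊤) : CyclicVertex G :=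
  ⟨Subgroup.zpowers g, zpowers_eq_bot.not.mpr hg, htop, inferInstance⟩

theorem isProperNontrivialDivisor_card [Finite G] (V : CyclicVertex G) :
    IsProperNontrivialDivisor (Nat.card G) (Nat.card V.1) :=
  ⟨card_subgroup_dvd_card V.1, (one_lt_card_iff_ne_bot _).mpr V.2.1,
    (card_le_card_group _).lt_of_ne fun h => V.2.2.1 (eq_top_of_card_eq _ h)⟩

variable [Finite G] [IsCyclic G]

theorem exists_card_eq {d : ℕ} (hd : IsProperNontrivialDivisor (Nat.card G) d) :
    ∃ V : CyclicVertex G, Nat.card V.1 = d := by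
  obtain ⟨H, hH⟩ := IsCyclic.exists_subgroup_card_eq hd.1
  refine ⟨⟨H, ?_, fun h => ?_, inferInstance⟩, hH⟩
  · rw [← one_lt_card_iff_ne_bot, hH]
    exact hd.2.1
  · rw [h, card_top] at hH
    exact hd.2.2.ne' hH

theorem eq_of_card_eq {U V : CyclicVertex G} (h : Nat.card U.1 = Nat.card V.1) : U = V :=
  Subtype.ext (IsCyclic.subgroup_eq_of_card_eq h)

end CyclicVertex

namespace cyclicIntersectionGraph

variable {G : Type*} [Group G] {C : CyclicVertex G}

theorem eq_of_le_of_isStarCenter (hC : (cyclicIntersectionGraph G).IsStarCenter C)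
    {U V : CyclicVertex G} (hU : U ≠ C) (hV : V ≠ C) (h : U.1 ≤ V.1) : U = V := by
  by_contra hne
  exact hC.2 U V hU hV ⟨hne, by rw [inf_eq_left.mpr h]; exact U.2.1⟩

theorem eq_of_lt_of_isStarCenter (hC : (cyclicIntersectionGraph G).IsStarCenter C)
    {U V : CyclicVertex G} (hU : C.1 < U.1) (hV : C.1 < V.1) : U = V := by
  by_contra hne
  refine hC.2 U V (fun h => hU.ne (h ▸ rfl)) (fun h => hV.ne (h ▸ rfl)) ⟨hne, ?_⟩
  exact ne_bot_of_le_ne_bot C.2.1 (le_inf hU.le hV.le)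

theorem le_or_ge_of_isStarCenter (hC : (cyclicIntersectionGraph G).IsStarCenter C)
    (V : CyclicVertex G) : V.1 ≤ C.1 ∨ C.1 ≤ V.1 := by
  by_cases hVC : V = C
  · exact .inl (hVC ▸ le_rfl)
  obtain ⟨⟨g, hg⟩, hg1⟩ := ne_bot_iff_exists_ne_one.mp (hC.1 V hVC).2
  obtain ⟨hgC, hgV⟩ := mem_inf.mp hg
  have hgC' : zpowers g ≤ C.1 := zpowers_le.mpr hgC
  let W := CyclicVertex.zpowers g (by simpa using hg1) fun h =>
    C.2.2.1 (top_le_iff.mp (h.symm.trans_le hgC'))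
  by_cases hWC : W = C
  · exact .inr (hWC ▸ zpowers_le.mpr hgV)
  · rw [← eq_of_le_of_isStarCenter hC hWC hVC (zpowers_le.mpr hgV)]
    exact .inl hgC'

theorem exists_forall_le_of_isStarCenter (hC : (cyclicIntersectionGraph G).IsStarCenter C) :
    ∃ M : CyclicVertex G, ∀ V : CyclicVertex G, V.1 ≤ M.1 := by
  by_cases hU : ∃ U : CyclicVertex G, C.1 < U.1
  · obtain ⟨U, hCU⟩ := hU
    refine ⟨U, fun V => (le_or_ge_of_isStarCenter hC V).elim (·.trans hCU.le) fun hCV => ?_⟩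
    rcases hCV.lt_or_eq with hCV | hCV
    · exact (eq_of_lt_of_isStarCenter hC hCV hCU) ▸ le_rfl
    · exact hCV ▸ hCU.le
  · push Not at hU
    exact ⟨C, fun V => (le_or_ge_of_isStarCenter hC V).elim id fun hCV =>
      (eq_of_le_of_not_lt hCV (hU V)).ge⟩

theorem isCyclic_of_isStarCenter (hC : (cyclicIntersectionGraph G).IsStarCenter C) :
    IsCyclic G := by
  by_contra hG
  have htop : ∀ g : G, zpowers g ≠ ⊤ := fun g h =>
    hG (isCyclic_iff_exists_zpowers_eq_top.mpr ⟨g, h⟩)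
  obtain ⟨M, hM⟩ := exists_forall_le_of_isStarCenter hC
  refine M.2.2.1 ((eq_top_iff' _).mpr fun g => ?_)
  by_cases hg : g = 1
  · exact hg ▸ M.1.one_mem
  · exact hM (CyclicVertex.zpowers g hg (htop g)) (mem_zpowers g)

theorem exists_prime_card_eq_pow_three_of_isStarCenter [Finite G] {L : CyclicVertex G}
    (hC : (cyclicIntersectionGraph G).IsStarCenter C) (hL : L ≠ C) :
    ∃ p, p.Prime ∧ Nat.card G = p ^ 3 := by
  have := isCyclic_of_isStarCenter hC
  refine C.isProperNontrivialDivisor_card.exists_prime_eq_pow_three ?_ ?_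
    ⟨_, L.isProperNontrivialDivisor_card, fun h => hL (CyclicVertex.eq_of_card_eq h)⟩
  · intro d hd
    obtain ⟨V, rfl⟩ := CyclicVertex.exists_card_eq hd
    exact (le_or_ge_of_isStarCenter hC V).imp card_dvd_of_le card_dvd_of_le
  · intro d hd e he hne hde
    obtain ⟨U, rfl⟩ := CyclicVertex.exists_card_eq hd.1
    obtain ⟨V, rfl⟩ := CyclicVertex.exists_card_eq he.1
    have hUC : U ≠ C := fun h => hd.2 (h ▸ rfl)
    have hVC : V ≠ C := fun h => he.2 (h ▸ rfl)
    rw [eq_of_le_of_isStarCenter hC hUC hVC (IsCyclic.subgroup_le_iff_card_dvd.mpr hde)] at hne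
    exact hne rfl

variable [Finite G] [IsCyclic G]

theorem eq_top_of_card_eq_prime_pow {p k : ℕ} (hp : p.Prime) (hG : Nat.card G = p ^ k) :
    cyclicIntersectionGraph G = ⊤ := by
  ext U V
  refine ⟨fun h => h.1, fun hne => ⟨hne, ?_⟩⟩
  rcases IsCyclic.subgroup_le_total hp hG U.1 V.1 with h | h
  · rw [inf_eq_left.mpr h]
    exact U.2.1
  · rw [inf_eq_right.mpr h]
    exact V.2.1

theorem nonempty_iso_of_card_eq_prime_pow_three {p : ℕ} (hp : p.Prime)
    (hG : Nat.card G = p ^ 3) :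
    Nonempty (cyclicIntersectionGraph G ≃g completeBipartiteGraph (Fin 1) (Fin 1)) := by
  obtain ⟨A, hA⟩ := CyclicVertex.exists_card_eq
    (hG ▸ IsProperNontrivialDivisor.prime_pow hp one_pos (by norm_num))
  obtain ⟨B, hB⟩ := CyclicVertex.exists_card_eq
    (hG ▸ IsProperNontrivialDivisor.prime_pow hp two_pos (by norm_num))
  rw [eq_top_of_card_eq_prime_pow hp hG]
  refine SimpleGraph.nonempty_top_iso_completeBipartiteGraph_fin_one_fin_one (a := A) (b := B)
    (fun h => ?_) fun V => ?_
  · rw [h, hB] at hA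
    simpa using Nat.pow_right_injective hp.two_le hA
  · obtain ⟨i, hi0, hi3, hV⟩ :=
      IsProperNontrivialDivisor.exists_eq_pow hp (hG ▸ V.isProperNontrivialDivisor_card)
    interval_cases i
    · exact .inl (CyclicVertex.eq_of_card_eq (hV.trans hA.symm))
    · exact .inr (CyclicVertex.eq_of_card_eq (hV.trans hB.symm))

end cyclicIntersectionGraph

theorem stmt9 (G : Type*) [Group G] [Finite G] :
    (∃ n : ℕ, 1 ≤ n ∧
        Nonempty (cyclicIntersectionGraph G ≃g completeBipartiteGraph (Fin 1) (Fin n))) ↔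
      ∃ p : ℕ, p.Prime ∧ Nonempty (G ≃* Multiplicative (ZMod (p ^ 3))) := by
  constructor
  · rintro ⟨n, hn, ⟨φ⟩⟩
    have hC := φ.isStarCenter_symm_inl
    have hG := cyclicIntersectionGraph.isCyclic_of_isStarCenter hC
    obtain ⟨p, hp, hcard⟩ :=
      cyclicIntersectionGraph.exists_prime_card_eq_pow_three_of_isStarCenter hC
        (L := φ.symm (Sum.inr ⟨0, hn⟩)) (by simp)
    exact ⟨p, hp, ⟨(hcard ▸ zmodCyclicMulEquiv hG).symm⟩⟩
  · rintro ⟨p, hp, ⟨e⟩⟩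
    have := e.isCyclic.mpr inferInstance
    have hcard : Nat.card G = p ^ 3 := by
      rw [Nat.card_congr e.toEquiv, Nat.card_congr Multiplicative.toAdd, Nat.card_zmod]
    exact ⟨1, le_rfl, cyclicIntersectionGraph.nonempty_iso_of_card_eq_prime_pow_three hp hcard⟩
end

section
/- Let G be a finite group. If the intersection graph of cyclic subgroups I_c(G) contains no triangle, then I_c(G) is acyclic (a forest). -/
/-!
Adjacent vertices `A`, `B` are comparable: otherwise the cyclic subgroup generated by a
nontrivial element of `A ⊓ B` would form a triangle with them. Hence on a path `A - B - C`
with `A ≠ C`, where triangle-freeness gives `A ⊓ C = ⊥`, the middle vertex strictly contains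
both ends. Along a cycle `v - b - c - d - ⋯` this forces `b < c < b`.
-/

theorem SimpleGraph.isAcyclic_of_lt_of_adj_of_adj {V α : Type*} [Preorder α]
    {G : SimpleGraph V} (f : V → α)
    (hf : ∀ ⦃u v w⦄, G.Adj u v → G.Adj v w → u ≠ w → f u < f v) : G.IsAcyclic := by
  rintro v (_ | ⟨hvb, _ | ⟨hbc, _ | ⟨hcd, q⟩⟩⟩) hp
  iterate 3 simpa using hp.three_le_length
  have hnodup := hp.support_nodup
  simp only [SimpleGraph.Walk.support_cons, List.tail_cons, List.nodup_cons,
    List.mem_cons, not_or] at hnodup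
  obtain ⟨⟨-, hbq⟩, hcq, -⟩ := hnodup
  exact lt_asymm (hf hbc.symm hvb.symm fun e => hcq (e ▸ q.end_mem_support))
    (hf hbc hcd fun e => hbq (e ▸ q.start_mem_support))

namespace cyclicIntersectionGraph

variable {G : Type*} [Group G] {A B C : CyclicVertex G}

theorem adj_of_le (hne : A ≠ B) (hle : A.1 ≤ B.1) : (cyclicIntersectionGraph G).Adj A B :=
  ⟨hne, by rw [inf_eq_left.mpr hle]; exact A.2.1⟩

theorem le_or_le_of_adj (h : (cyclicIntersectionGraph G).CliqueFree 3)
    (hAB : (cyclicIntersectionGraph G).Adj A B) : A.1 ≤ B.1 ∨ B.1 ≤ A.1 := by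
  obtain ⟨x, hx, hx1⟩ := (Subgroup.bot_or_exists_ne_one _).resolve_left hAB.2
  have hxA : Subgroup.zpowers x ≤ A.1 := Subgroup.zpowers_le.mpr (Subgroup.mem_inf.mp hx).1
  have hxB : Subgroup.zpowers x ≤ B.1 := Subgroup.zpowers_le.mpr (Subgroup.mem_inf.mp hx).2
  let X : CyclicVertex G := ⟨Subgroup.zpowers x, by simpa using hx1,
    fun htop => A.2.2.1 (top_le_iff.mp (htop.symm.trans_le hxA)), inferInstance⟩
  by_cases hXA : X = A
  · exact .inl (hXA ▸ hxB)
  by_cases hXB : X = B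
  · exact .inr (hXB ▸ hxA)
  exact absurd (adj_of_le hXB hxB) <|
    SimpleGraph.isIndepSet_neighborSet_of_triangleFree _ h A (adj_of_le hXA hxA).symm hAB hXB

theorem lt_of_adj_of_adj (h : (cyclicIntersectionGraph G).CliqueFree 3)
    (hAB : (cyclicIntersectionGraph G).Adj A B) (hBC : (cyclicIntersectionGraph G).Adj B C)
    (hAC : A ≠ C) : A.1 < B.1 := by
  have hAC_bot : A.1 ⊓ C.1 = ⊥ := not_not.mp fun hne =>
    SimpleGraph.isIndepSet_neighborSet_of_triangleFree _ h B hAB.symm hBC hAC ⟨hAC, hne⟩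
  rcases le_or_le_of_adj h hAB with hle | hle
  · exact hle.lt_of_ne fun e => hAB.1 (Subtype.ext e)
  · exact absurd (le_bot_iff.mp ((inf_le_inf_right C.1 hle).trans_eq hAC_bot)) hBC.2

end cyclicIntersectionGraph

theorem stmt13_general (G : Type*) [Group G]
    (h : (cyclicIntersectionGraph G).CliqueFree 3) :
    (cyclicIntersectionGraph G).IsAcyclic :=
  SimpleGraph.isAcyclic_of_lt_of_adj_of_adj (fun A => A.1) fun _ _ _ =>
    cyclicIntersectionGraph.lt_of_adj_of_adj h

theorem stmt13 (G : Type*) [Group G] [Finite G]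
    (h : (cyclicIntersectionGraph G).CliqueFree 3) :
    (cyclicIntersectionGraph G).IsAcyclic :=
  stmt13_general G h
end

section
/- Let n = p_1^{α_1}···p_k^{α_k} with k ≥ 2 distinct primes. The domination number of the intersection graph of cyclic subgroups of Z_n is 1 if some α_i > 1, and is 2 if all α_i = 1. In particular, if some α_i > 1 then the subgroup of Z_n of order p_1 p_2 ··· p_k intersects every other proper nontrivial subgroup nontrivially. -/
/-- The domination number: minimum size of a set of vertices such that every vertex
outside the set is adjacent to a member of the set. -/
noncomputable def dominationNumber {V : Type*} (G : SimpleGraph V) : ℕ :=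
  sInf {m : ℕ | ∃ D : Finset V, D.card = m ∧ ∀ v ∉ D, ∃ u ∈ D, G.Adj u v}

namespace SimpleGraph

variable {V : Type*} (G : SimpleGraph V)

def IsDominatingSet (D : Finset V) : Prop :=
  ∀ v ∉ D, ∃ u ∈ D, G.Adj u v

variable {G}

lemma dominationNumber_eq_card {D : Finset V} (hD : G.IsDominatingSet D)
    (hmin : ∀ D', G.IsDominatingSet D' → D.card ≤ D'.card) : dominationNumber G = D.card := by
  have hne : {m | ∃ D, D.card = m ∧ G.IsDominatingSet D}.Nonempty := ⟨_, D, rfl, hD⟩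
  obtain ⟨D', hD', hdom⟩ := Nat.sInf_mem hne
  refine le_antisymm (Nat.sInf_le ⟨D, rfl, hD⟩) ?_
  change D.card ≤ sInf {m | ∃ D, D.card = m ∧ G.IsDominatingSet D}
  exact hD' ▸ hmin D' hdom

lemma isDominatingSet_singleton_iff {u : V} : G.IsDominatingSet {u} ↔ ∀ v ≠ u, G.Adj u v := by
  simp [IsDominatingSet]

lemma IsDominatingSet.nonempty [Nonempty V] {D : Finset V} (hD : G.IsDominatingSet D) :
    D.Nonempty := by
  obtain ⟨v⟩ := ‹Nonempty V›
  by_cases hv : v ∈ D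
  · exact ⟨v, hv⟩
  · obtain ⟨u, hu, -⟩ := hD v hv
    exact ⟨u, hu⟩

lemma dominationNumber_eq_one {u : V} (hu : ∀ v ≠ u, G.Adj u v) : dominationNumber G = 1 := by
  have : Nonempty V := ⟨u⟩
  exact dominationNumber_eq_card (isDominatingSet_singleton_iff.2 hu)
    fun D hD => hD.nonempty.card_pos

lemma dominationNumber_eq_two [DecidableEq V] {u w : V} (huw : u ≠ w)
    (hD : G.IsDominatingSet {u, w}) (hsingle : ∀ x, ¬ G.IsDominatingSet {x}) :
    dominationNumber G = 2 := by
  have : Nonempty V := ⟨u⟩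
  rw [dominationNumber_eq_card hD, Finset.card_pair huw]
  intro D hD'
  rw [Finset.card_pair huw]
  by_contra! hlt
  have hcard : D.card = 1 := by have := hD'.nonempty.card_pos; omega
  obtain ⟨x, rfl⟩ := Finset.card_eq_one.1 hcard
  exact hsingle x hD'

end SimpleGraph

namespace IsAddCyclic

variable {G : Type*} [AddCommGroup G] [IsAddCyclic G] [Finite G]

lemma card_ker_nsmul_of_dvd {d : ℕ} (hd : d ∣ Nat.card G) :
    Nat.card (nsmulAddMonoidHom d : G →+ G).ker = d := by
  rw [card_nsmulAddMonoidHom_ker, Nat.gcd_eq_right hd]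

/-- Every subgroup lies in the kernel of multiplication by its order, and in a cyclic group that
kernel has the same order. -/
lemma addSubgroup_eq_ker_nsmul_card (H : AddSubgroup G) :
    H = (nsmulAddMonoidHom (Nat.card H) : G →+ G).ker := by
  refine AddSubgroup.eq_of_le_of_card_ge (fun x hx => ?_) ?_
  · exact congrArg Subtype.val (card_nsmul_eq_zero' (x := (⟨x, hx⟩ : H)))
  · rw [card_ker_nsmul_of_dvd (AddSubgroup.card_addSubgroup_dvd_card H)]

lemma addSubgroup_le_iff_card_dvd {H K : AddSubgroup G} : H ≤ K ↔ Nat.card H ∣ Nat.card K := by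
  refine ⟨AddSubgroup.card_dvd_of_le, fun hdvd x hx => ?_⟩
  rw [addSubgroup_eq_ker_nsmul_card H, AddMonoidHom.mem_ker, nsmulAddMonoidHom_apply] at hx
  rw [addSubgroup_eq_ker_nsmul_card K, AddMonoidHom.mem_ker, nsmulAddMonoidHom_apply]
  obtain ⟨c, hc⟩ := hdvd
  rw [hc, mul_nsmul, hx, nsmul_zero]

lemma exists_addSubgroup_card_eq {d : ℕ} (hd : d ∣ Nat.card G) :
    ∃ H : AddSubgroup G, Nat.card H = d :=
  ⟨_, card_ker_nsmul_of_dvd hd⟩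

lemma disjoint_iff_coprime_card {H K : AddSubgroup G} :
    Disjoint H K ↔ (Nat.card H).Coprime (Nat.card K) := by
  refine ⟨fun hdisj => ?_, AddSubgroup.disjoint_of_coprime_natCard⟩
  obtain ⟨L, hL⟩ := exists_addSubgroup_card_eq (d := (Nat.card H).gcd (Nat.card K))
    ((Nat.gcd_dvd_left _ _).trans (AddSubgroup.card_addSubgroup_dvd_card H))
  have hLH : L ≤ H := addSubgroup_le_iff_card_dvd.2 (hL ▸ Nat.gcd_dvd_left _ _)
  have hLK : L ≤ K := addSubgroup_le_iff_card_dvd.2 (hL ▸ Nat.gcd_dvd_right _ _)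
  rw [Nat.coprime_iff_gcd_eq_one, ← hL, le_bot_iff.1 (hdisj hLH hLK), AddSubgroup.card_bot]

end IsAddCyclic

namespace Nat

lemma Prime.ne_of_two_le_card_primeFactors {p n : ℕ} (hp : p.Prime)
    (hn : 2 ≤ n.primeFactors.card) : p ≠ n := by
  rintro rfl
  rw [hp.primeFactors, Finset.card_singleton] at hn
  omega

lemma squarefree_prod_primeFactors (n : ℕ) : Squarefree (∏ p ∈ n.primeFactors, p) :=
  radical_eq_prod_primeFactors ▸ UniqueFactorizationMonoid.squarefree_radical

lemma not_coprime_prod_primeFactors {n d : ℕ} (hn : n ≠ 0) (hd : d ∣ n) (hd1 : d ≠ 1) :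
    ¬ Coprime (∏ p ∈ n.primeFactors, p) d := by
  have hq := minFac_prime hd1
  rw [Prime.not_coprime_iff_dvd]
  exact ⟨d.minFac, hq, Finset.dvd_prod_of_mem _
    (mem_primeFactors.2 ⟨hq, (minFac_dvd d).trans hd, hn⟩), minFac_dvd d⟩

lemma exists_prime_dvd_not_dvd_of_squarefree {n d : ℕ} (hn : Squarefree n) (hd : d ∣ n)
    (hdn : d ≠ n) : ∃ q, q.Prime ∧ q ∣ n ∧ ¬ q ∣ d := by
  by_contra! h
  have hd0 : d ≠ 0 := by rintro rfl; exact hn.ne_zero (Nat.eq_zero_of_zero_dvd hd)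
  refine hdn (dvd_antisymm hd ?_)
  rw [← prod_primeFactors_of_squarefree hn, prod_primeFactors_dvd_iff hd0]
  intro q hq
  obtain ⟨hq, hqn, -⟩ := mem_primeFactors.1 hq
  exact mem_primeFactors.2 ⟨hq, h q hq hqn, hd0⟩

lemma eq_one_of_coprime_of_coprime_div {n p d : ℕ} (hpn : p ∣ n) (hd : d ∣ n)
    (hp : Coprime p d) (hnp : Coprime (n / p) d) : d = 1 := by
  rw [← Nat.mul_div_cancel' hpn] at hd
  exact hnp.symm.eq_one_of_dvd (hp.symm.dvd_of_dvd_mul_left hd)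

end Nat

namespace AddCyclicVertex

variable {G : Type*} [AddGroup G]

lemma card_dvd (v : AddCyclicVertex G) : Nat.card v.1 ∣ Nat.card G :=
  AddSubgroup.card_addSubgroup_dvd_card _

lemma card_ne_one (v : AddCyclicVertex G) : Nat.card v.1 ≠ 1 :=
  mt AddSubgroup.card_eq_one.1 v.2.1

lemma card_ne_card [Finite G] (v : AddCyclicVertex G) : Nat.card v.1 ≠ Nat.card G :=
  mt (AddSubgroup.card_eq_iff_eq_top _).1 v.2.2.1

lemma ne_of_card_ne {u v : AddCyclicVertex G} (h : Nat.card u.1 ≠ Nat.card v.1) : u ≠ v := by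
  rintro rfl
  exact h rfl

end AddCyclicVertex

section FiniteCyclic

variable {G : Type*} [AddCommGroup G] [IsAddCyclic G] [Finite G]

lemma AddCyclicVertex.exists_card_eq {d : ℕ} (hd : d ∣ Nat.card G) (h1 : d ≠ 1)
    (hG : d ≠ Nat.card G) : ∃ v : AddCyclicVertex G, Nat.card v.1 = d := by
  obtain ⟨H, hH⟩ := IsAddCyclic.exists_addSubgroup_card_eq hd
  exact ⟨⟨H, fun h => h1 (hH ▸ AddSubgroup.card_eq_one.2 h),
    fun h => hG (hH ▸ (AddSubgroup.card_eq_iff_eq_top H).2 h), inferInstance⟩, hH⟩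

lemma addCyclicIntersectionGraph_adj_iff {u v : AddCyclicVertex G} :
    (addCyclicIntersectionGraph G).Adj u v ↔
      u ≠ v ∧ ¬ (Nat.card u.1).Coprime (Nat.card v.1) := by
  rw [← IsAddCyclic.disjoint_iff_coprime_card, disjoint_iff]
  rfl

lemma inf_ne_bot_of_card_eq_prod_primeFactors {H K : AddSubgroup G}
    (hH : Nat.card H = ∏ p ∈ (Nat.card G).primeFactors, p) (hK : K ≠ ⊥) : H ⊓ K ≠ ⊥ := by
  rw [ne_eq, ← disjoint_iff, IsAddCyclic.disjoint_iff_coprime_card, hH]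
  exact Nat.not_coprime_prod_primeFactors Nat.card_pos.ne'
    (AddSubgroup.card_addSubgroup_dvd_card K) (mt AddSubgroup.card_eq_one.1 hK)

theorem dominationNumber_addCyclicIntersectionGraph_of_not_squarefree
    (h : ¬ Squarefree (Nat.card G)) : dominationNumber (addCyclicIntersectionGraph G) = 1 := by
  set r := ∏ p ∈ (Nat.card G).primeFactors, p
  have hG1 : Nat.card G ≠ 1 := fun hG => h (hG ▸ squarefree_one)
  have hr1 : r ≠ 1 := fun hr => Nat.not_coprime_prod_primeFactors Nat.card_pos.ne' dvd_rfl hG1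
    (show r.Coprime _ from hr ▸ Nat.coprime_one_left _)
  have hrG : r ≠ Nat.card G := fun hr => h (hr ▸ Nat.squarefree_prod_primeFactors _)
  obtain ⟨u, hu⟩ := AddCyclicVertex.exists_card_eq (Nat.prod_primeFactors_dvd _) hr1 hrG
  exact SimpleGraph.dominationNumber_eq_one fun v hv =>
    ⟨hv.symm, inf_ne_bot_of_card_eq_prod_primeFactors hu v.2.1⟩

lemma isDominatingSet_pair_of_card_mul_card_eq [DecidableEq (AddCyclicVertex G)] {p : ℕ}
    {u w : AddCyclicVertex G} (hpG : p ∣ Nat.card G) (hu : Nat.card u.1 = p)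
    (hw : Nat.card w.1 = Nat.card G / p) :
    (addCyclicIntersectionGraph G).IsDominatingSet {u, w} := by
  intro v hv
  simp only [Finset.mem_insert, Finset.mem_singleton, not_or] at hv
  by_cases huv : (Nat.card u.1).Coprime (Nat.card v.1)
  · refine ⟨w, by simp, addCyclicIntersectionGraph_adj_iff.2 ⟨Ne.symm hv.2, fun hwv => ?_⟩⟩
    exact v.card_ne_one
      (Nat.eq_one_of_coprime_of_coprime_div hpG v.card_dvd (hu ▸ huv) (hw ▸ hwv))
  · exact ⟨u, by simp, addCyclicIntersectionGraph_adj_iff.2 ⟨Ne.symm hv.1, huv⟩⟩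

lemma not_isDominatingSet_singleton_of_squarefree (h : Squarefree (Nat.card G))
    (hk : 2 ≤ (Nat.card G).primeFactors.card) (x : AddCyclicVertex G) :
    ¬ (addCyclicIntersectionGraph G).IsDominatingSet {x} := by
  rw [SimpleGraph.isDominatingSet_singleton_iff]
  intro hx
  obtain ⟨q, hq, hqG, hqx⟩ :=
    Nat.exists_prime_dvd_not_dvd_of_squarefree h x.card_dvd x.card_ne_card
  obtain ⟨v, hv⟩ :=
    AddCyclicVertex.exists_card_eq hqG hq.ne_one (hq.ne_of_two_le_card_primeFactors hk)
  have hvx : v ≠ x := AddCyclicVertex.ne_of_card_ne (by rw [hv]; rintro rfl; exact hqx dvd_rfl)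
  exact (addCyclicIntersectionGraph_adj_iff.1 (hx v hvx)).2
    (hv ▸ ((Nat.Prime.coprime_iff_not_dvd hq).2 hqx).symm)

theorem dominationNumber_addCyclicIntersectionGraph_of_squarefree (h : Squarefree (Nat.card G))
    (hk : 2 ≤ (Nat.card G).primeFactors.card) :
    dominationNumber (addCyclicIntersectionGraph G) = 2 := by
  classical
  obtain ⟨p, hp⟩ := Finset.card_pos.1 (by omega : 0 < (Nat.card G).primeFactors.card)
  obtain ⟨hp, hpG, -⟩ := Nat.mem_primeFactors.1 hp
  have hG : p * (Nat.card G / p) = Nat.card G := Nat.mul_div_cancel' hpG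
  have hp_ne_div : p ≠ Nat.card G / p := fun hp_eq =>
    hp.ne_one (Nat.isUnit_iff.1 (h p (by nth_rw 2 [hp_eq]; exact dvd_of_eq hG)))
  obtain ⟨u, hu⟩ :=
    AddCyclicVertex.exists_card_eq hpG hp.ne_one (hp.ne_of_two_le_card_primeFactors hk)
  obtain ⟨w, hw⟩ := AddCyclicVertex.exists_card_eq (Nat.div_dvd_of_dvd hpG)
    (fun hdiv => hp.ne_of_two_le_card_primeFactors hk (by rw [← hG, hdiv, mul_one]))
    (Nat.div_lt_self Nat.card_pos hp.one_lt).ne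
  exact SimpleGraph.dominationNumber_eq_two (AddCyclicVertex.ne_of_card_ne (hu ▸ hw ▸ hp_ne_div))
    (isDominatingSet_pair_of_card_mul_card_eq hpG hu hw)
    (not_isDominatingSet_singleton_of_squarefree h hk)

end FiniteCyclic

theorem stmt19 (n : ℕ) (hk : 2 ≤ n.primeFactors.card) :
    (¬ Squarefree n → dominationNumber (addCyclicIntersectionGraph (ZMod n)) = 1) ∧
    (Squarefree n → dominationNumber (addCyclicIntersectionGraph (ZMod n)) = 2) ∧
    (¬ Squarefree n →
      ∃ H : AddSubgroup (ZMod n), Nat.card H = ∏ p ∈ n.primeFactors, p ∧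
        ∀ K : AddSubgroup (ZMod n), K ≠ ⊥ → K ≠ ⊤ → K ≠ H → H ⊓ K ≠ ⊥) := by
  have : NeZero n := ⟨by rintro rfl; simp at hk⟩
  have hcard : Nat.card (ZMod n) = n := Nat.card_zmod n
  refine ⟨fun h => ?_, fun h => ?_, fun _ => ?_⟩
  · exact dominationNumber_addCyclicIntersectionGraph_of_not_squarefree (by rwa [hcard])
  · exact dominationNumber_addCyclicIntersectionGraph_of_squarefree (by rwa [hcard])
      (by rwa [hcard])
  · obtain ⟨H, hH⟩ := IsAddCyclic.exists_addSubgroup_card_eq (G := ZMod n)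
      (d := ∏ p ∈ n.primeFactors, p) (by rw [hcard]; exact Nat.prod_primeFactors_dvd n)
    exact ⟨H, hH, fun K hK _ _ => inf_ne_bot_of_card_eq_prod_primeFactors (by rw [hH, hcard]) hK⟩
end
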